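/- arXiv:2604.10423 — 5 statements merged into one kernel-verified Lean document; each statement's English description precedes it below -/
import Mathlib

section
/- Let m ∈ ℕ, θ ∈ (1/4, 3/4), and let a₀, …, a_m ∈ [0,1]. Define p(θ) = Σ_{j=0}^m a_j · C(m,j) · θ^j (1−θ)^{m−j}. Then |p'(θ)| ≤ 6 · E[|X − mθ|] where X ~ Binomial(m, θ), and consequently |p'(θ)| ≤ 6·√(m θ(1−θ)) ≤ 3√m. -/
/-!
The Binomial(m, θ) probabilities are the values b_j(θ) of the Bernstein polynomials
b_j = C(m,j) X^j (1-X)^(m-j), and these satisfy X(1-X) b_j' = b_j (j - mX). Hence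
θ(1-θ) p'(θ) = Σ_j a_j b_j(θ) (j - mθ), which for 0 ≤ a_j ≤ 1 is at most E|X - mθ| in absolute
value; on (1/4, 3/4) we have θ(1-θ) > 3/16 > 1/6. By Cauchy–Schwarz the mean absolute deviation
is at most the standard deviation √(mθ(1-θ)) ≤ √m / 2.
-/

open Finset Polynomial

lemma sum_mul_abs_le_sqrt_mul_sqrt {ι : Type*} (s : Finset ι) {w f : ι → ℝ}
    (hw : ∀ i ∈ s, 0 ≤ w i) :
    ∑ i ∈ s, w i * |f i| ≤ √(∑ i ∈ s, w i) * √(∑ i ∈ s, w i * f i ^ 2) := by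
  rw [← Real.sqrt_mul (sum_nonneg hw)]
  refine (le_abs_self _).trans (Real.abs_le_sqrt ?_)
  refine sum_sq_le_sum_mul_sum_of_sq_le_mul s hw (fun i hi => by have := hw i hi; positivity)
    fun i _ => le_of_eq ?_
  rw [mul_pow, sq_abs]; ring

namespace bernsteinPolynomial

variable {R : Type*} [CommRing R]

lemma eval_eq (m j : ℕ) (x : R) :
    (bernsteinPolynomial R m j).eval x = m.choose j * x ^ j * (1 - x) ^ (m - j) := by
  simp [bernsteinPolynomial]

lemma X_mul_one_sub_X_mul_derivative {m j : ℕ} (hj : j ≤ m) :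
    X * (1 - X) * derivative (bernsteinPolynomial R m j)
      = bernsteinPolynomial R m j * ((j : R[X]) - (m : R[X]) * X) := by
  have mul_natCast_mul_pow_pred (n : ℕ) (q : R[X]) : q * (n * q ^ (n - 1)) = n * q ^ n := by
    rcases eq_or_ne n 0 with rfl | hn
    · simp
    · rw [mul_left_comm, mul_pow_sub_one hn]
  have h1 := mul_natCast_mul_pow_pred j X
  have h2 := mul_natCast_mul_pow_pred (m - j) (1 - X)
  simp only [bernsteinPolynomial, derivative_mul, derivative_natCast, C_eq_natCast,
    derivative_pow, derivative_sub, derivative_one, derivative_X]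
  rw [Nat.cast_sub hj] at h2 ⊢
  linear_combination (↑(m.choose j) * (1 - X) ^ (m - j) * (1 - X)) * h1
    - (↑(m.choose j) * X ^ j * X) * h2

lemma sum_eval (m : ℕ) (x : R) :
    ∑ j ∈ range (m + 1), (bernsteinPolynomial R m j).eval x = 1 := by
  simpa [eval_finsetSum] using congrArg (eval x) (sum R m)

lemma sum_eval_mul_sq (m : ℕ) (x : R) :
    ∑ j ∈ range (m + 1), (bernsteinPolynomial R m j).eval x * ((j : R) - m * x) ^ 2
      = m * x * (1 - x) := by
  have h := congrArg (eval x) (variance R m)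
  simp only [eval_finsetSum, eval_mul, eval_pow, eval_sub, eval_X, eval_natCast,
    eval_one, nsmul_eq_mul] at h
  rw [← h]
  exact sum_congr rfl fun j _ => by ring

lemma X_mul_one_sub_X_mul_derivative_sum (m : ℕ) (a : ℕ → R) :
    X * (1 - X) * derivative (∑ j ∈ range (m + 1), C (a j) * bernsteinPolynomial R m j)
      = ∑ j ∈ range (m + 1),
          C (a j) * bernsteinPolynomial R m j * ((j : R[X]) - (m : R[X]) * X) := by
  simp only [derivative_sum, derivative_C_mul, mul_sum]
  refine sum_congr rfl fun j hj => ?_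
  rw [mul_left_comm, X_mul_one_sub_X_mul_derivative (Nat.lt_succ_iff.mp (mem_range.mp hj)),
    mul_assoc]

lemma eval_nonneg (m j : ℕ) {x : ℝ} (hx₀ : 0 ≤ x) (hx₁ : x ≤ 1) :
    0 ≤ (bernsteinPolynomial ℝ m j).eval x := by
  have := sub_nonneg.mpr hx₁
  rw [eval_eq]
  positivity

lemma mul_abs_deriv_sum_le {m : ℕ} {a : ℕ → ℝ} (ha : ∀ j, |a j| ≤ 1) {x : ℝ}
    (hx₀ : 0 ≤ x) (hx₁ : x ≤ 1) :
    x * (1 - x) *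
        |deriv (fun y => ∑ j ∈ range (m + 1), a j * (bernsteinPolynomial ℝ m j).eval y) x|
      ≤ ∑ j ∈ range (m + 1), (bernsteinPolynomial ℝ m j).eval x * |(j : ℝ) - m * x| := by
  set p := ∑ j ∈ range (m + 1), C (a j) * bernsteinPolynomial ℝ m j
  have hp : (fun y => ∑ j ∈ range (m + 1), a j * (bernsteinPolynomial ℝ m j).eval y)
      = fun y => p.eval y := by
    funext y; simp [p, eval_finsetSum]
  have hx : 0 ≤ x * (1 - x) := mul_nonneg hx₀ (by linarith)
  have key := congrArg (eval x) (X_mul_one_sub_X_mul_derivative_sum m a)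
  simp only [eval_mul, eval_sub, eval_X, eval_one, eval_C, eval_finsetSum, eval_natCast] at key
  rw [hp, Polynomial.deriv, ← abs_of_nonneg hx, ← abs_mul, key]
  refine (abs_sum_le_sum_abs _ _).trans (sum_le_sum fun j _ => ?_)
  rw [abs_mul, abs_mul, abs_of_nonneg (eval_nonneg m j hx₀ hx₁), mul_assoc]
  exact mul_le_of_le_one_left (mul_nonneg (eval_nonneg m j hx₀ hx₁) (abs_nonneg _)) (ha j)

lemma sum_eval_mul_abs_sub_le_sqrt (m : ℕ) {x : ℝ} (hx₀ : 0 ≤ x) (hx₁ : x ≤ 1) :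
    ∑ j ∈ range (m + 1), (bernsteinPolynomial ℝ m j).eval x * |(j : ℝ) - m * x|
      ≤ √(m * x * (1 - x)) := by
  simpa only [sum_eval, Real.sqrt_one, one_mul, sum_eval_mul_sq] using
    sum_mul_abs_le_sqrt_mul_sqrt (range (m + 1)) (f := fun j => (j : ℝ) - m * x)
      fun j _ => eval_nonneg m j hx₀ hx₁

end bernsteinPolynomial

/-- Derivative bound for the acceptance-probability polynomial
p(θ) = Σ_j a_j C(m,j) θ^j (1−θ)^{m−j} with coefficients a_j ∈ [0,1] and θ ∈ (1/4, 3/4):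
|p'(θ)| ≤ 6·E|X − mθ| for X ~ Binomial(m,θ), hence |p'(θ)| ≤ 6√(mθ(1−θ)) ≤ 3√m. -/
theorem stmt_4 (m : ℕ) (θ : ℝ) (hθ1 : 1/4 < θ) (hθ2 : θ < 3/4)
    (a : ℕ → ℝ) (ha : ∀ j, 0 ≤ a j ∧ a j ≤ 1) :
    |deriv (fun x : ℝ =>
        ∑ j ∈ range (m + 1), a j * (m.choose j : ℝ) * x ^ j * (1 - x) ^ (m - j)) θ|
        ≤ 6 * ∑ j ∈ range (m + 1),
            (m.choose j : ℝ) * θ ^ j * (1 - θ) ^ (m - j) * |(j : ℝ) - m * θ| ∧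
    |deriv (fun x : ℝ =>
        ∑ j ∈ range (m + 1), a j * (m.choose j : ℝ) * x ^ j * (1 - x) ^ (m - j)) θ|
        ≤ 6 * Real.sqrt (m * θ * (1 - θ)) ∧
    |deriv (fun x : ℝ =>
        ∑ j ∈ range (m + 1), a j * (m.choose j : ℝ) * x ^ j * (1 - x) ^ (m - j)) θ|
        ≤ 3 * Real.sqrt m := by
  have hθ₀ : 0 ≤ θ := by linarith
  have hθ₁ : θ ≤ 1 := by linarith
  simp only [mul_assoc (a _), ← bernsteinPolynomial.eval_eq]
  set D := |deriv (fun x => ∑ j ∈ range (m + 1), a j * (bernsteinPolynomial ℝ m j).eval x) θ|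
  set E := ∑ j ∈ range (m + 1), (bernsteinPolynomial ℝ m j).eval θ * |(j : ℝ) - m * θ|
  have hDE : θ * (1 - θ) * D ≤ E := bernsteinPolynomial.mul_abs_deriv_sum_le
    (fun j => abs_le.mpr ⟨by linarith [(ha j).1], (ha j).2⟩) hθ₀ hθ₁
  have hD : D ≤ 6 * E := by
    have hθ : 1 / 6 ≤ θ * (1 - θ) := by nlinarith
    nlinarith [mul_le_mul_of_nonneg_right hθ (abs_nonneg _ : 0 ≤ D)]
  have hEσ : E ≤ √(m * θ * (1 - θ)) :=
    bernsteinPolynomial.sum_eval_mul_abs_sub_le_sqrt m hθ₀ hθ₁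
  have hσ : √(m * θ * (1 - θ)) ≤ √m / 2 := by
    rw [Real.sqrt_le_left (by positivity), div_pow, Real.sq_sqrt (Nat.cast_nonneg m)]
    nlinarith [sq_nonneg (θ - 1 / 2), (Nat.cast_nonneg m : (0 : ℝ) ≤ m)]
  exact ⟨hD, hD.trans (by linarith), hD.trans (by linarith)⟩
end

section
/- Let P, Q be probability distributions on a countable set Y such that for all events O: e^{−ε}(Q(O) − δ) ≤ P(O) ≤ e^{ε} Q(O) + δ, with ε > 0 and δ ≥ 0. Define E = { y : |ln(P(y)/Q(y))| ≤ 2ε }. Then P(E) ≥ 1 − 2δ/(1 − e^{−ε}). -/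
/-!
If `P y > e^{2ε} Q y` on a set `A`, then `P(A) ≤ e^ε Q(A) + δ ≤ e^{-ε} P(A) + δ`, so
`P(A) ≤ δ / (1 - e^{-ε})`. The two-sided hypothesis is symmetric in `P` and `Q`, so the same bound
holds for `Q(B)`, where `B` is the set on which `Q y > e^{2ε} P y`, and `P(B) ≤ Q(B)`. Outside
`A ∪ B` the log-likelihood ratio is at most `2ε` in absolute value.
-/

open scoped ENNReal
open Real

lemma Real.le_exp_neg_mul_of_lt_log_div {p q c : ℝ} (hp : 0 ≤ p) (hq : 0 ≤ q) (hc : 0 ≤ c)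
    (h : c < log (p / q)) : q ≤ exp (-c) * p := by
  have hpq : 0 < p / q :=
    (div_nonneg hp hq).lt_of_ne fun h0 => by rw [← h0, log_zero] at h; linarith
  have hq0 : 0 < q := hq.lt_of_ne (by rintro rfl; simp at hpq)
  have hlt : exp c * q < p := (lt_div_iff₀ hq0).1 ((lt_log_iff_exp_lt hpq).1 h)
  rw [exp_neg, ← div_eq_inv_mul, le_div_iff₀ (exp_pos c)]
  linarith

namespace PMF

variable {α : Type*}

lemma toOuterMeasure_ne_top (p : PMF α) (s : Set α) : p.toOuterMeasure s ≠ ∞ := by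
  rw [toOuterMeasure_apply]
  exact p.tsum_coe_indicator_ne_top s

lemma toReal_toOuterMeasure_le_mul (p q : PMF α) {s : Set α} {c : ℝ} (hc : 0 ≤ c)
    (h : ∀ y ∈ s, (p y).toReal ≤ c * (q y).toReal) :
    (p.toOuterMeasure s).toReal ≤ c * (q.toOuterMeasure s).toReal := by
  have hle : p.toOuterMeasure s ≤ ENNReal.ofReal c * q.toOuterMeasure s := by
    rw [toOuterMeasure_apply, toOuterMeasure_apply, ← ENNReal.tsum_mul_left]
    refine ENNReal.tsum_le_tsum fun y => ?_
    by_cases hy : y ∈ s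
    · rw [Set.indicator_of_mem hy, Set.indicator_of_mem hy,
        ← ENNReal.toReal_le_toReal (p.apply_ne_top y)
          (ENNReal.mul_ne_top ENNReal.ofReal_ne_top (q.apply_ne_top y)),
        ENNReal.toReal_mul, ENNReal.toReal_ofReal hc]
      exact h y hy
    · simp [Set.indicator_of_notMem hy]
  calc (p.toOuterMeasure s).toReal
      ≤ (ENNReal.ofReal c * q.toOuterMeasure s).toReal :=
        ENNReal.toReal_mono (ENNReal.mul_ne_top ENNReal.ofReal_ne_top (q.toOuterMeasure_ne_top s))
          hle
    _ = c * (q.toOuterMeasure s).toReal := by rw [ENNReal.toReal_mul, ENNReal.toReal_ofReal hc]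

lemma toReal_toOuterMeasure_union_le (p : PMF α) (s t : Set α) :
    (p.toOuterMeasure (s ∪ t)).toReal ≤
      (p.toOuterMeasure s).toReal + (p.toOuterMeasure t).toReal :=
  ENNReal.toReal_le_add (MeasureTheory.measure_union_le s t) (p.toOuterMeasure_ne_top s)
    (p.toOuterMeasure_ne_top t)

lemma one_sub_toReal_toOuterMeasure_le (p : PMF α) {s t : Set α} (h : sᶜ ⊆ t) :
    1 - (p.toOuterMeasure t).toReal ≤ (p.toOuterMeasure s).toReal := by
  have hcover : p.toOuterMeasure Set.univ ≤ p.toOuterMeasure s + p.toOuterMeasure t :=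
    (p.toOuterMeasure.mono fun y _ => (em (y ∈ s)).imp_right (@h y)).trans
      (MeasureTheory.measure_union_le s t)
  rw [(p.toOuterMeasure_apply_eq_one_iff _).2 (Set.subset_univ _)] at hcover
  have := ENNReal.toReal_le_add hcover (p.toOuterMeasure_ne_top s) (p.toOuterMeasure_ne_top t)
  rw [ENNReal.toReal_one] at this
  linarith

lemma toReal_toOuterMeasure_lt_log_div_le (p q : PMF α) {ε δ c : ℝ} (hc : 0 ≤ c) (hεc : ε < c)
    (h : ∀ O, (p.toOuterMeasure O).toReal ≤ exp ε * (q.toOuterMeasure O).toReal + δ) :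
    (p.toOuterMeasure {y | c < log ((p y).toReal / (q y).toReal)}).toReal ≤
      δ / (1 - exp (ε - c)) := by
  set A := {y | c < log ((p y).toReal / (q y).toReal)}
  have hqA : (q.toOuterMeasure A).toReal ≤ exp (-c) * (p.toOuterMeasure A).toReal :=
    toReal_toOuterMeasure_le_mul q p (exp_pos _).le fun y hy =>
      le_exp_neg_mul_of_lt_log_div ENNReal.toReal_nonneg ENNReal.toReal_nonneg hc hy
  have hpA : (p.toOuterMeasure A).toReal ≤ exp (ε - c) * (p.toOuterMeasure A).toReal + δ :=
    calc (p.toOuterMeasure A).toReal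
        ≤ exp ε * (q.toOuterMeasure A).toReal + δ := h A
      _ ≤ exp ε * (exp (-c) * (p.toOuterMeasure A).toReal) + δ := by
          gcongr
      _ = exp (ε - c) * (p.toOuterMeasure A).toReal + δ := by
          rw [← mul_assoc, ← exp_add, sub_eq_add_neg]
  rw [le_div_iff₀ (sub_pos.2 (exp_lt_one_iff.2 (sub_neg.2 hεc)))]
  linarith

end PMF

theorem stmt_6_general {Y : Type*} (P Q : PMF Y) (ε δ : ℝ) (hε : 0 < ε)
    (h : ∀ O : Set Y,
      Real.exp (-ε) * ((Q.toOuterMeasure O).toReal - δ) ≤ (P.toOuterMeasure O).toReal ∧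
      (P.toOuterMeasure O).toReal ≤ Real.exp ε * (Q.toOuterMeasure O).toReal + δ) :
    1 - 2 * δ / (1 - Real.exp (-ε)) ≤
      (P.toOuterMeasure {y | |Real.log ((P y).toReal / (Q y).toReal)| ≤ 2 * ε}).toReal := by
  set A := {y | 2 * ε < log ((P y).toReal / (Q y).toReal)}
  set B := {y | 2 * ε < log ((Q y).toReal / (P y).toReal)}
  have hQP (O : Set Y) :
      (Q.toOuterMeasure O).toReal ≤ exp ε * (P.toOuterMeasure O).toReal + δ := by
    have := mul_le_mul_of_nonneg_left (h O).1 (exp_pos ε).le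
    rw [← mul_assoc, ← exp_add, add_neg_cancel, exp_zero, one_mul] at this
    linarith
  have hc : 0 ≤ 2 * ε := by positivity
  have hεc : ε < 2 * ε := by linarith
  have hexp : exp (ε - 2 * ε) = exp (-ε) := by ring_nf
  have hA : (P.toOuterMeasure A).toReal ≤ δ / (1 - exp (-ε)) :=
    hexp ▸ PMF.toReal_toOuterMeasure_lt_log_div_le P Q hc hεc fun O => (h O).2
  have hQB : (Q.toOuterMeasure B).toReal ≤ δ / (1 - exp (-ε)) :=
    hexp ▸ PMF.toReal_toOuterMeasure_lt_log_div_le Q P hc hεc hQP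
  have hPB : (P.toOuterMeasure B).toReal ≤ 1 * (Q.toOuterMeasure B).toReal :=
    PMF.toReal_toOuterMeasure_le_mul P Q zero_le_one fun y hy =>
      (le_exp_neg_mul_of_lt_log_div ENNReal.toReal_nonneg ENNReal.toReal_nonneg hc hy).trans
        (mul_le_mul_of_nonneg_right (exp_le_one_iff.2 (neg_nonpos.2 hc)) ENNReal.toReal_nonneg)
  have hcover : {y | |log ((P y).toReal / (Q y).toReal)| ≤ 2 * ε}ᶜ ⊆ A ∪ B :=
    fun y (hy : ¬|log ((P y).toReal / (Q y).toReal)| ≤ 2 * ε) => by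
      rcases lt_abs.1 (not_le.1 hy) with hy | hy
      · exact Or.inl hy
      · exact Or.inr (show 2 * ε < log ((Q y).toReal / (P y).toReal) by rwa [← inv_div, log_inv])
  have hE := P.one_sub_toReal_toOuterMeasure_le hcover
  have hAB := P.toReal_toOuterMeasure_union_le A B
  rw [two_mul, add_div]
  linarith

/-- If P ≈_{ε,δ} Q (two-sided multiplicative-additive indistinguishability on all events),
then the set E of outcomes with |ln(P(y)/Q(y))| ≤ 2ε satisfies P(E) ≥ 1 − 2δ/(1 − e^{−ε}). -/
theorem stmt_6 {Y : Type*} [Countable Y] (P Q : PMF Y) (ε δ : ℝ) (hε : 0 < ε) (hδ : 0 ≤ δ)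
    (h : ∀ O : Set Y,
      Real.exp (-ε) * ((Q.toOuterMeasure O).toReal - δ) ≤ (P.toOuterMeasure O).toReal ∧
      (P.toOuterMeasure O).toReal ≤ Real.exp ε * (Q.toOuterMeasure O).toReal + δ) :
    1 - 2 * δ / (1 - Real.exp (-ε)) ≤
      (P.toOuterMeasure {y | |Real.log ((P y).toReal / (Q y).toReal)| ≤ 2 * ε}).toReal :=
  stmt_6_general P Q ε δ hε h
end

section
/- Let P, Q be probability distributions on a countable set Y, let ε ∈ (0,1], and let E ⊆ Y be a set on which |ln(P(y)/Q(y))| ≤ 2ε for all y ∈ E. Suppose P(E) ≥ 1 − d for some d ∈ [0, 1). Then Σ_{y ∈ E} P(y | E) · ln(P(y)/Q(y)) ≤ Σ_{y ∈ E} Q(y) · ln(P(y)/Q(y)) + 2ε(e^{2ε}/(1 − d) − 1). -/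
/-! On `E` the ratio `P(y)/Q(y)` lies in `[e^{-2ε}, e^{2ε}]`, and `1 - d ≤ P(E) ≤ 1`, so the
conditional weight satisfies `|P(y)/P(E) - Q(y)| ≤ (e^{2ε}/(1-d) - 1) Q(y)`; on the lower side this
needs `1 - e^{-2ε} ≤ e^{2ε} - 1`, i.e. `cosh (2ε) ≥ 1`. Multiplying by `|ln(P(y)/Q(y))| ≤ 2ε`
bounds the difference of the two sums termwise by `2ε (e^{2ε}/(1-d) - 1) Q(y)`, and `Q(E) ≤ 1`. -/

open Real

theorem Real.one_sub_exp_neg_le_exp_sub_one (t : ℝ) : 1 - exp (-t) ≤ exp t - 1 := by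
  linarith [one_le_cosh t, cosh_eq t]

theorem Summable.mul_of_abs_le {ι : Type*} {f g : ι → ℝ} {C : ℝ} (hf : Summable f)
    (hg : ∀ i, |g i| ≤ C) : Summable fun i => f i * g i :=
  .of_norm_bounded (hf.abs.mul_right C) fun i => by
    rw [Real.norm_eq_abs, abs_mul]
    exact mul_le_mul_of_nonneg_left (hg i) (abs_nonneg _)

namespace PMF

variable {α : Type*} (p : PMF α)

theorem summable_toReal : Summable fun a => (p a).toReal :=
  ENNReal.summable_toReal p.tsum_coe_ne_top

theorem toReal_toOuterMeasure_eq_tsum (s : Set α) :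
    (p.toOuterMeasure s).toReal = ∑' a : s, (p a).toReal := by
  rw [toOuterMeasure_apply, ← tsum_subtype, ENNReal.tsum_toReal_eq fun a => p.apply_ne_top _]

theorem toReal_toOuterMeasure_le_one (s : Set α) : (p.toOuterMeasure s).toReal ≤ 1 :=
  ENNReal.toReal_le_of_le_ofReal zero_le_one <| by
    rw [ENNReal.ofReal_one, ← (p.toOuterMeasure_apply_eq_one_iff _).2 (Set.subset_univ _)]
    exact p.toOuterMeasure.mono (Set.subset_univ s)

end PMF

theorem abs_div_sub_le_of_exp_neg_mul_le {p q s a t : ℝ} (hq : 0 ≤ q)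
    (hlo : exp (-t) * q ≤ p) (hhi : p ≤ exp t * q) (ha : 0 < a) (has : a ≤ s) (hs : s ≤ 1) :
    |p / s - q| ≤ (exp t / a - 1) * q := by
  have hs0 : 0 < s := ha.trans_le has
  have hp : 0 ≤ p := (by positivity : 0 ≤ exp (-t) * q).trans hlo
  rw [abs_le]
  constructor
  · have hexp : exp t - 1 ≤ exp t / a - 1 := by
      gcongr
      exact le_div_self (exp_pos t).le ha (has.trans hs)
    have hps : p ≤ p / s := le_div_self hp hs0 hs
    nlinarith [one_sub_exp_neg_le_exp_sub_one t]
  · have : p / s ≤ exp t * q / a := div_le_div₀ (by positivity) hhi ha has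
    have : exp t * q / a - q = (exp t / a - 1) * q := by field_simp
    linarith

-- If `p = 0` or `q = 0` then `log (p / q) = 0` (junk value), so both sides reduce to `0 ≤ t * C * q`.
theorem div_mul_log_div_le {p q s a t : ℝ} (hp : 0 ≤ p) (hq : 0 ≤ q) (ha : 0 < a)
    (has : a ≤ s) (hs : s ≤ 1) (hL : |log (p / q)| ≤ t) :
    p / s * log (p / q) ≤ q * log (p / q) + t * (exp t / a - 1) * q := by
  have ht : 0 ≤ t := (abs_nonneg _).trans hL
  have hC : 0 ≤ exp t / a - 1 :=
    sub_nonneg.2 <| (one_le_div ha).2 <| (has.trans hs).trans (one_le_exp ht)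
  rcases hp.eq_or_lt with rfl | hp
  · simp only [zero_div, log_zero, mul_zero, zero_add]
    positivity
  rcases hq.eq_or_lt with rfl | hq
  · simp
  obtain ⟨hlog_lo, hlog_hi⟩ := abs_le.1 hL
  have hlo : exp (-t) * q ≤ p := by
    rwa [← le_div_iff₀ hq, ← le_log_iff_exp_le (div_pos hp hq)]
  have hhi : p ≤ exp t * q := by
    rwa [← div_le_iff₀ hq, ← log_le_iff_le_exp (div_pos hp hq)]
  calc p / s * log (p / q) = q * log (p / q) + (p / s - q) * log (p / q) := by ring
    _ ≤ q * log (p / q) + |p / s - q| * |log (p / q)| :=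
        add_le_add_right ((le_abs_self _).trans (abs_mul _ _).le) _
    _ ≤ q * log (p / q) + (exp t / a - 1) * q * t := by
        gcongr
        exact abs_div_sub_le_of_exp_neg_mul_le hq.le hlo hhi ha has hs
    _ = q * log (p / q) + t * (exp t / a - 1) * q := by ring

theorem stmt_7_general {Y : Type*} [Countable Y] (P Q : PMF Y) (ε : ℝ) (hε0 : 0 < ε)
    (E : Set Y) (hE : ∀ y ∈ E, |Real.log ((P y).toReal / (Q y).toReal)| ≤ 2 * ε)
    (d : ℝ) (hd1 : d < 1)
    (hPE : 1 - d ≤ (P.toOuterMeasure E).toReal) :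
    ∑' y : E, ((P (y : Y)).toReal / (P.toOuterMeasure E).toReal) *
        Real.log ((P (y : Y)).toReal / (Q (y : Y)).toReal)
      ≤ (∑' y : E, (Q (y : Y)).toReal *
            Real.log ((P (y : Y)).toReal / (Q (y : Y)).toReal))
        + 2 * ε * (Real.exp (2 * ε) / (1 - d) - 1) := by
  set L : E → ℝ := fun y => log ((P y).toReal / (Q y).toReal)
  set C := exp (2 * ε) / (1 - d) - 1
  have hd : 0 < 1 - d := sub_pos.2 hd1
  have hpE1 := P.toReal_toOuterMeasure_le_one E
  have hL (y : E) : |L y| ≤ 2 * ε := hE y y.2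
  have hC : 0 ≤ C := sub_nonneg.2 <| (one_le_div hd).2 <|
    hPE.trans <| hpE1.trans (one_le_exp (by positivity))
  have hQE : ∑' y : E, (Q y).toReal ≤ 1 :=
    Q.toReal_toOuterMeasure_eq_tsum E ▸ Q.toReal_toOuterMeasure_le_one E
  have hQ : Summable fun y : E => (Q y).toReal := Q.summable_toReal.subtype E
  calc ∑' y : E, (P y).toReal / (P.toOuterMeasure E).toReal * L y
      ≤ ∑' y : E, ((Q y).toReal * L y + 2 * ε * C * (Q y).toReal) :=
        Summable.tsum_le_tsum
          (fun y => div_mul_log_div_le ENNReal.toReal_nonneg ENNReal.toReal_nonneg hd hPE hpE1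
            (hL y))
          (((P.summable_toReal.subtype E).div_const _).mul_of_abs_le hL)
          ((hQ.mul_of_abs_le hL).add (hQ.mul_left _))
    _ = ∑' y : E, (Q y).toReal * L y + 2 * ε * C * ∑' y : E, (Q y).toReal := by
        rw [(hQ.mul_of_abs_le hL).tsum_add (hQ.mul_left _), tsum_mul_left]
    _ ≤ ∑' y : E, (Q y).toReal * L y + 2 * ε * C :=
        add_le_add_right (mul_le_of_le_one_right (by positivity) hQE) _

/-- Conditional-vs-oracle weighted log-ratio bound: if |ln(P(y)/Q(y))| ≤ 2ε on E and
P(E) ≥ 1 − d, then Σ_{y∈E} P(y|E) ln(P(y)/Q(y)) ≤ Σ_{y∈E} Q(y) ln(P(y)/Q(y))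
+ 2ε(e^{2ε}/(1−d) − 1). -/
theorem stmt_7 {Y : Type*} [Countable Y] (P Q : PMF Y) (ε : ℝ) (hε0 : 0 < ε) (hε1 : ε ≤ 1)
    (E : Set Y) (hE : ∀ y ∈ E, |Real.log ((P y).toReal / (Q y).toReal)| ≤ 2 * ε)
    (d : ℝ) (hd0 : 0 ≤ d) (hd1 : d < 1)
    (hPE : 1 - d ≤ (P.toOuterMeasure E).toReal) :
    ∑' y : E, ((P (y : Y)).toReal / (P.toOuterMeasure E).toReal) *
        Real.log ((P (y : Y)).toReal / (Q (y : Y)).toReal)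
      ≤ (∑' y : E, (Q (y : Y)).toReal *
            Real.log ((P (y : Y)).toReal / (Q (y : Y)).toReal))
        + 2 * ε * (Real.exp (2 * ε) / (1 - d) - 1) :=
  stmt_7_general P Q ε hε0 E hE d hd1 hPE
end

section
/- Let (M_i)_{i=0}^k be a {0,1}-valued non-increasing adapted process with M₀ = 1, and let (X'_i)_{i=1}^k be {0,1}-valued predictable random variables (X'_i measurable w.r.t. the past before step i). Suppose E[M_i | F_{i−1}] ≤ M_{i−1}(1 − (p/2)·X'_i) for all i, for some p ∈ [0,1], and E[Σ_i X'_i] ≥ k/2. Then 1 − E[M_k] ≥ (pk/4)/(1 + pk/2). -/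
open MeasureTheory Finset

/-!
Each step loses mass at rate `p/2` on the event `{X'_i = 1}`, and that event can be intersected
with `{M_k = 1}` since `M` only decreases. Telescoping gives `1 - E[M_k] ≥ (p/2) E[M_k Y']` with
`Y' = ∑ X'_i`. On the other hand `Y' ≤ k`, so `E[(1 - M_k) Y'] ≤ k (1 - E[M_k])`, i.e.
`E[M_k Y'] ≥ k/2 - k (1 - E[M_k])`. The two bounds form a linear inequality in `1 - E[M_k]`.
-/

theorem sum_le_sub_of_succ_le_sub {a b : ℕ → ℝ} {k : ℕ} (h : ∀ i < k, a (i + 1) ≤ a i - b i) :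
    ∑ i ∈ range k, b i ≤ a 0 - a k :=
  (sum_range_sub' a k).symm ▸
    sum_le_sum fun i hi => by linarith [h i (mem_range.mp hi)]

theorem div_le_of_mul_le_of_sub_le {p k t S : ℝ} (hp : 0 ≤ p) (hk : 0 ≤ k)
    (hdrift : p / 2 * S ≤ t) (hS : k / 2 - k * t ≤ S) :
    p * k / 4 / (1 + p * k / 2) ≤ t := by
  rw [div_le_iff₀ (by positivity)]
  nlinarith [mul_le_mul_of_nonneg_left hS (by positivity : 0 ≤ p / 2)]

section

variable {Ω : Type*} {m0 : MeasurableSpace Ω} {μ : Measure Ω}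

theorem integrable_of_mem_unitInterval [IsFiniteMeasure μ] {f : Ω → ℝ}
    (hf : AEStronglyMeasurable f μ) (h01 : ∀ ω, f ω ∈ unitInterval) : Integrable f μ :=
  .of_bound hf 1 <| ae_of_all _ fun ω => by
    rw [Real.norm_eq_abs, abs_of_nonneg (h01 ω).1]
    exact (h01 ω).2

theorem integral_le_sub_of_condExp_le_mul_one_sub [IsFiniteMeasure μ] {m : MeasurableSpace Ω}
    (hm : m ≤ m0) {f g h : Ω → ℝ} (c : ℝ) (hf : Integrable f μ)
    (hfh : Integrable (fun ω => f ω * h ω) μ)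
    (hcond : μ[g|m] ≤ᵐ[μ] fun ω => f ω * (1 - c * h ω)) :
    ∫ ω, g ω ∂μ ≤ ∫ ω, f ω ∂μ - c * ∫ ω, f ω * h ω ∂μ := by
  have hexpand : (fun ω => f ω * (1 - c * h ω)) = fun ω => f ω - c * (f ω * h ω) := by
    ext ω; ring
  calc ∫ ω, g ω ∂μ = ∫ ω, (μ[g|m]) ω ∂μ := (integral_condExp hm).symm
    _ ≤ ∫ ω, f ω * (1 - c * h ω) ∂μ :=
      integral_mono_ae integrable_condExp (hexpand ▸ hf.sub (hfh.const_mul c)) hcond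
    _ = ∫ ω, f ω ∂μ - c * ∫ ω, f ω * h ω ∂μ := by
      rw [hexpand, integral_sub hf (hfh.const_mul c), integral_const_mul]

variable [IsProbabilityMeasure μ] {X : ℕ → Ω → ℝ}

theorem sum_integral_le_one_sub_integral_of_condExp_le (ℱ : Filtration ℕ m0)
    (hXm : ∀ i, AEStronglyMeasurable (X i) μ) (hX : ∀ i ω, X i ω ∈ unitInterval) {M : ℕ → Ω → ℝ}
    (hMm : ∀ i, AEStronglyMeasurable (M i) μ) (hM : ∀ i ω, M i ω ∈ unitInterval)
    (hM0 : ∀ ω, M 0 ω = 1) (hmono : ∀ i ω, M (i + 1) ω ≤ M i ω) {c : ℝ} (hc : 0 ≤ c)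
    (hcond : ∀ i, μ[M (i + 1)|ℱ i] ≤ᵐ[μ] fun ω => M i ω * (1 - c * X i ω)) (k : ℕ) :
    c * ∑ i ∈ range k, ∫ ω, M k ω * X i ω ∂μ ≤ 1 - ∫ ω, M k ω ∂μ := by
  have hMXint : ∀ i j, Integrable (fun ω => M i ω * X j ω) μ := fun i j =>
    integrable_of_mem_unitInterval ((hMm i).mul (hXm j))
      fun ω => unitInterval.mul_mem (hM i ω) (hX j ω)
  have hstep : ∀ i < k,
      ∫ ω, M (i + 1) ω ∂μ ≤ ∫ ω, M i ω ∂μ - c * ∫ ω, M k ω * X i ω ∂μ := by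
    intro i hik
    have hMk_le : ∀ ω, M k ω * X i ω ≤ M i ω * X i ω := fun ω =>
      mul_le_mul_of_nonneg_right
        (antitone_nat_of_succ_le (f := fun n => M n ω) (hmono · ω) hik.le) (hX i ω).1
    have := integral_le_sub_of_condExp_le_mul_one_sub (ℱ.le i) c
      (integrable_of_mem_unitInterval (hMm i) (hM i)) (hMXint i i) (hcond i)
    linarith [mul_le_mul_of_nonneg_left (integral_mono (hMXint k i) (hMXint i i) hMk_le) hc]
  rw [mul_sum]
  simpa [hM0] using sum_le_sub_of_succ_le_sub (a := fun i => ∫ ω, M i ω ∂μ) hstep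

theorem integral_sum_sub_le_sum_integral_mul (hXm : ∀ i, AEStronglyMeasurable (X i) μ)
    (hX : ∀ i ω, X i ω ∈ unitInterval) {M : Ω → ℝ} (hMm : AEStronglyMeasurable M μ)
    (hM : ∀ ω, M ω ∈ unitInterval) (k : ℕ) :
    ∫ ω, ∑ i ∈ range k, X i ω ∂μ - k * (1 - ∫ ω, M ω ∂μ) ≤
      ∑ i ∈ range k, ∫ ω, M ω * X i ω ∂μ := by
  have hMint := integrable_of_mem_unitInterval hMm hM
  have hXint : ∀ i, Integrable (X i) μ := fun i =>
    integrable_of_mem_unitInterval (hXm i) (hX i)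
  have hMXint : ∀ i, Integrable (fun ω => M ω * X i ω) μ := fun i =>
    integrable_of_mem_unitInterval (hMm.mul (hXm i)) fun ω => unitInterval.mul_mem (hM ω) (hX i ω)
  have hpointwise : ∀ ω, ∑ i ∈ range k, X i ω - k * (1 - M ω) ≤ ∑ i ∈ range k, M ω * X i ω := by
    intro ω
    have hsum_le : ∑ i ∈ range k, X i ω ≤ k := by
      simpa using sum_le_card_nsmul (range k) (X · ω) 1 fun i _ => (hX i ω).2
    rw [← mul_sum]
    nlinarith [(hM ω).1, (hM ω).2]
  have hYint : Integrable (fun ω => ∑ i ∈ range k, X i ω) μ :=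
    integrable_finsetSum _ fun i _ => hXint i
  have hslack : Integrable (fun ω => k * (1 - M ω)) μ :=
    ((integrable_const 1).sub hMint).const_mul k
  calc ∫ ω, ∑ i ∈ range k, X i ω ∂μ - k * (1 - ∫ ω, M ω ∂μ)
      = ∫ ω, (∑ i ∈ range k, X i ω - k * (1 - M ω)) ∂μ := by
        rw [integral_sub hYint hslack, integral_const_mul,
          integral_sub (integrable_const 1) hMint]
        simp
    _ ≤ ∫ ω, ∑ i ∈ range k, M ω * X i ω ∂μ :=
      integral_mono (hYint.sub hslack) (integrable_finsetSum _ fun i _ => hMXint i) hpointwise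
    _ = ∑ i ∈ range k, ∫ ω, M ω * X i ω ∂μ := integral_finsetSum _ fun i _ => hMXint i

end

theorem stmt_14_general {Ω : Type*} {m0 : MeasurableSpace Ω} (μ : Measure Ω) [IsProbabilityMeasure μ]
    (ℱ : Filtration ℕ m0) (k : ℕ) (M : ℕ → Ω → ℝ) (X' : ℕ → Ω → ℝ)
    (p : ℝ) (hp0 : 0 ≤ p)
    (hM01 : ∀ i ω, M i ω = 0 ∨ M i ω = 1)
    (hM0 : ∀ ω, M 0 ω = 1)
    (hmono : ∀ i ω, M (i + 1) ω ≤ M i ω)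
    (hMadapted : ∀ i, StronglyMeasurable[ℱ i] (M i))
    (hX01 : ∀ i ω, X' i ω = 0 ∨ X' i ω = 1)
    (hXpred : ∀ i, StronglyMeasurable[ℱ i] (X' i))
    (hcond : ∀ i, μ[M (i + 1)|ℱ i] ≤ᵐ[μ] fun ω => M i ω * (1 - p / 2 * X' i ω))
    (hsum : (k : ℝ) / 2 ≤ ∫ ω, ∑ i ∈ range k, X' i ω ∂μ) :
    (p * k / 4) / (1 + p * k / 2) ≤ 1 - ∫ ω, M k ω ∂μ := by
  have hM : ∀ i ω, M i ω ∈ unitInterval := fun i ω => by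
    rcases hM01 i ω with h | h <;> simp [h]
  have hX : ∀ i ω, X' i ω ∈ unitInterval := fun i ω => by
    rcases hX01 i ω with h | h <;> simp [h]
  have hMm : ∀ i, AEStronglyMeasurable (M i) μ := fun i =>
    ((hMadapted i).mono (ℱ.le i)).aestronglyMeasurable
  have hXm : ∀ i, AEStronglyMeasurable (X' i) μ := fun i =>
    ((hXpred i).mono (ℱ.le i)).aestronglyMeasurable
  refine div_le_of_mul_le_of_sub_le hp0 k.cast_nonneg
    (sum_integral_le_one_sub_integral_of_condExp_le ℱ hXm hX hMm hM hM0 hmono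
      (by positivity) hcond k) ?_
  linarith [integral_sum_sub_le_sum_integral_mul hXm hX (hMm k) (hM k) k]

/-- Telescoping supermartingale bound (adaptive lower bound, replicability case): if M is a
{0,1}-valued non-increasing adapted process with M₀ = 1, the X'_i are {0,1}-valued predictable,
E[M_{i+1} | ℱ_i] ≤ M_i(1 − (p/2)X'_i), and E[Σ X'_i] ≥ k/2, then
1 − E[M_k] ≥ (pk/4)/(1 + pk/2). -/
theorem stmt_14 {Ω : Type*} {m0 : MeasurableSpace Ω} (μ : Measure Ω) [IsProbabilityMeasure μ]
    (ℱ : Filtration ℕ m0) (k : ℕ) (M : ℕ → Ω → ℝ) (X' : ℕ → Ω → ℝ)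
    (p : ℝ) (hp0 : 0 ≤ p) (hp1 : p ≤ 1)
    (hM01 : ∀ i ω, M i ω = 0 ∨ M i ω = 1)
    (hM0 : ∀ ω, M 0 ω = 1)
    (hmono : ∀ i ω, M (i + 1) ω ≤ M i ω)
    (hMadapted : ∀ i, StronglyMeasurable[ℱ i] (M i))
    (hX01 : ∀ i ω, X' i ω = 0 ∨ X' i ω = 1)
    (hXpred : ∀ i, StronglyMeasurable[ℱ i] (X' i))
    (hcond : ∀ i, μ[M (i + 1)|ℱ i] ≤ᵐ[μ] fun ω => M i ω * (1 - p / 2 * X' i ω))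
    (hsum : (k : ℝ) / 2 ≤ ∫ ω, ∑ i ∈ range k, X' i ω ∂μ) :
    (p * k / 4) / (1 + p * k / 2) ≤ 1 - ∫ ω, M k ω ∂μ :=
  stmt_14_general μ ℱ k M X' p hp0 hM01 hM0 hmono hMadapted hX01 hXpred hcond hsum
end

section
/- Let (N_i)_{i=0}^k be a {0,1}-valued non-increasing adapted process with N₀ = 1, and let (Z_i)_{i=1}^k be {0,1}-valued predictable random variables with E[Σ_i Z_i] ≥ k/2. Suppose E[N_i | F_{i−1}] ≤ N_{i−1}(1 − (1/16)·Z_i) for all i. Then 1 − E[N_k] ≥ (k/32)/(1 + k/16). -/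
open MeasureTheory Finset

/-! Write `t = 1 - E[N_k]`. Taking expectations in the conditional bound gives
`E[N_{i-1}] - E[N_i] ≥ (1/16) E[N_{i-1} Z_i] ≥ (1/16) E[N_k Z_i]`, and telescoping over `i`
yields `E[N_k Σ Z_i] ≤ 16 t`. On the other hand `Σ Z_i ≤ k`, so
`k/2 ≤ E[Σ Z_i] ≤ E[N_k Σ Z_i] + k (1 - E[N_k]) ≤ 16 t + k t`, which is the claim. -/

section

variable {Ω : Type*} {m0 : MeasurableSpace Ω} {μ : Measure Ω}

theorem integrable_of_eq_zero_or_eq_one [IsFiniteMeasure μ] {f : Ω → ℝ}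
    (hf : StronglyMeasurable f) (h01 : ∀ ω, f ω = 0 ∨ f ω = 1) : Integrable f μ :=
  Integrable.of_bound hf.aestronglyMeasurable 1 <| ae_of_all _ fun ω => by
    rcases h01 ω with h | h <;> simp [h]

theorem mul_integral_mul_le_integral_sub_of_condExp_le [IsFiniteMeasure μ]
    {m : MeasurableSpace Ω} (hm : m ≤ m0) {f g x : Ω → ℝ} (c : ℝ) (hf : Integrable f μ)
    (hfx : Integrable (fun ω => f ω * x ω) μ)
    (hcond : μ[g|m] ≤ᵐ[μ] fun ω => f ω * (1 - c * x ω)) :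
    c * ∫ ω, f ω * x ω ∂μ ≤ (∫ ω, f ω ∂μ) - ∫ ω, g ω ∂μ := by
  have hexpand : (fun ω => f ω * (1 - c * x ω)) = fun ω => f ω - c * (f ω * x ω) := by
    ext ω; ring
  have hint := integral_mono_ae integrable_condExp
    (hexpand ▸ hf.sub (hfx.const_mul c)) hcond
  rw [integral_condExp hm, hexpand, integral_sub hf (hfx.const_mul c),
    integral_const_mul] at hint
  linarith

theorem mul_integral_mul_sum_le_of_condExp_le [IsFiniteMeasure μ] (ℱ : Filtration ℕ m0)
    {M X : ℕ → Ω → ℝ} {c : ℝ} (hc : 0 ≤ c) (hM : ∀ i, Integrable (M i) μ)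
    (hMX : ∀ i j, Integrable (fun ω => M i ω * X j ω) μ) (hX : ∀ i ω, 0 ≤ X i ω)
    (hanti : ∀ ω, Antitone (M · ω))
    (hcond : ∀ i, μ[M (i + 1)|ℱ i] ≤ᵐ[μ] fun ω => M i ω * (1 - c * X i ω)) (k : ℕ) :
    c * ∫ ω, M k ω * ∑ i ∈ range k, X i ω ∂μ ≤ (∫ ω, M 0 ω ∂μ) - ∫ ω, M k ω ∂μ := by
  calc c * ∫ ω, M k ω * ∑ i ∈ range k, X i ω ∂μ
      = ∑ i ∈ range k, c * ∫ ω, M k ω * X i ω ∂μ := by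
        simp_rw [mul_sum]
        rw [integral_finsetSum _ fun i _ => hMX k i, mul_sum]
    _ ≤ ∑ i ∈ range k, c * ∫ ω, M i ω * X i ω ∂μ :=
        sum_le_sum fun i hi => mul_le_mul_of_nonneg_left (integral_mono (hMX k i) (hMX i i)
          fun ω => mul_le_mul_of_nonneg_right (hanti ω (mem_range.1 hi).le) (hX i ω)) hc
    _ ≤ ∑ i ∈ range k, ((∫ ω, M i ω ∂μ) - ∫ ω, M (i + 1) ω ∂μ) :=
        sum_le_sum fun i _ =>
          mul_integral_mul_le_integral_sub_of_condExp_le (ℱ.le i) c (hM i) (hMX i i) (hcond i)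
    _ = (∫ ω, M 0 ω ∂μ) - ∫ ω, M k ω ∂μ := sum_range_sub' _ _

theorem integral_le_integral_mul_add_mul_one_sub [IsProbabilityMeasure μ] {N S : Ω → ℝ}
    {C : ℝ} (hN : Integrable N μ) (hS : Integrable S μ)
    (hNS : Integrable (fun ω => N ω * S ω) μ) (hN1 : ∀ ω, N ω ≤ 1) (hSC : ∀ ω, S ω ≤ C) :
    ∫ ω, S ω ∂μ ≤ (∫ ω, N ω * S ω ∂μ) + C * (1 - ∫ ω, N ω ∂μ) := by
  have hrest : Integrable (fun ω => C * (1 - N ω)) μ :=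
    ((integrable_const 1).sub hN).const_mul C
  have hint : ∫ ω, S ω ∂μ ≤ ∫ ω, N ω * S ω + C * (1 - N ω) ∂μ :=
    integral_mono hS (hNS.add hrest) fun ω => by nlinarith [hN1 ω, hSC ω]
  rwa [integral_add hNS hrest, integral_const_mul, integral_sub (integrable_const 1) hN,
    integral_const, probReal_univ, one_smul] at hint

end

/-- Telescoping supermartingale bound (adaptive lower bound, replicability case): if M is a
{0,1}-valued non-increasing adapted process with M₀ = 1, the X'_i are {0,1}-valued predictable,
E[M_{i+1} | ℱ_i] ≤ M_i(1 − (1/16)·Z'_i), and E[Σ X'_i] ≥ k/2, then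
1 − E[M_k] ≥ (k/32)/(1 + k/16). -/
theorem stmt_15 {Ω : Type*} {m0 : MeasurableSpace Ω} (μ : Measure Ω) [IsProbabilityMeasure μ]
    (ℱ : Filtration ℕ m0) (k : ℕ) (M : ℕ → Ω → ℝ) (X' : ℕ → Ω → ℝ)
    
    (hM01 : ∀ i ω, M i ω = 0 ∨ M i ω = 1)
    (hM0 : ∀ ω, M 0 ω = 1)
    (hmono : ∀ i ω, M (i + 1) ω ≤ M i ω)
    (hMadapted : ∀ i, StronglyMeasurable[ℱ i] (M i))
    (hX01 : ∀ i ω, X' i ω = 0 ∨ X' i ω = 1)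
    (hXpred : ∀ i, StronglyMeasurable[ℱ i] (X' i))
    (hcond : ∀ i, μ[M (i + 1)|ℱ i] ≤ᵐ[μ] fun ω => M i ω * (1 - (1 / 16) * X' i ω))
    (hsum : (k : ℝ) / 2 ≤ ∫ ω, ∑ i ∈ range k, X' i ω ∂μ) :
    ((k : ℝ) / 32) / (1 + k / 16) ≤ 1 - ∫ ω, M k ω ∂μ := by
  have hMb : ∀ i ω, 0 ≤ M i ω ∧ M i ω ≤ 1 := fun i ω => by
    rcases hM01 i ω with h | h <;> simp [h]
  have hXb : ∀ i ω, 0 ≤ X' i ω ∧ X' i ω ≤ 1 := fun i ω => by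
    rcases hX01 i ω with h | h <;> simp [h]
  have hM : ∀ i, Integrable (M i) μ := fun i =>
    integrable_of_eq_zero_or_eq_one ((hMadapted i).mono (ℱ.le i)) (hM01 i)
  have hX : ∀ i, Integrable (X' i) μ := fun i =>
    integrable_of_eq_zero_or_eq_one ((hXpred i).mono (ℱ.le i)) (hX01 i)
  have hMmul : ∀ i {g : Ω → ℝ}, Integrable g μ → Integrable (fun ω => M i ω * g ω) μ :=
    fun i _ hg => hg.bdd_mul ((hMadapted i).mono (ℱ.le i)).aestronglyMeasurable
      (ae_of_all _ fun ω => by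
        rw [Real.norm_eq_abs, abs_of_nonneg (hMb i ω).1]; exact (hMb i ω).2)
  have hS : Integrable (fun ω => ∑ i ∈ range k, X' i ω) μ :=
    integrable_finsetSum _ fun i _ => hX i
  have htel := mul_integral_mul_sum_le_of_condExp_le ℱ (by norm_num) hM
    (fun i j => hMmul i (hX j)) (fun i ω => (hXb i ω).1)
    (fun ω => antitone_nat_of_succ_le (hmono · ω)) hcond k
  have hcover := integral_le_integral_mul_add_mul_one_sub (C := k) (hM k) hS (hMmul k hS)
    (fun ω => (hMb k ω).2) fun ω => by
      simpa using sum_le_sum fun i (_ : i ∈ range k) => (hXb i ω).2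
  simp only [hM0, integral_const, probReal_univ, one_smul] at htel
  rw [div_le_iff₀ (by positivity)]
  linarith
end
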